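/- Let H be a real Hilbert space, A ⊆ H a nonempty bounded symmetric set (A = −A), f : H → ℝ convex and Fréchet differentiable, δ ∈ (0,1], ρ > 0, C > 0 and μ̃ > 0. Assume: (i) curvature bound: f(x + γρ s) ≤ f(x) + γ⟪∇f(x), ρ s⟫ + (γ²/2)·C for all x ∈ ρ·conv(A), s ∈ A and all γ ∈ ℝ; (ii) x⋆ ∈ ρ·conv(A) satisfies f(x⋆) ≤ f(w) for all w ∈ ρ·conv(A); (iii) (x_t)_{t≥0} satisfies x_t ∈ ρ·conv(A) for every t, z_t ∈ A is a δ-approximate matching-pursuit LMO output at x_t (⟪∇f(x_t), z_t⟫ ≤ δ·inf_{z∈A} ⟪∇f(x_t), z⟫), and x_{t+1} = x_t + (ρ²·⟪−∇f(x_t), z_t⟫/C)·z_t; (iv) strong-convexity-type bound: for every t with ⟪∇f(x_t), x⋆ − x_t⟫ < 0, it holds that f(x⋆) ≥ f(x_t) + ⟪∇f(x_t), x⋆ − x_t⟫ + (γ_t²/2)·μ̃, where γ_t := ⟪−∇f(x_t), x⋆ − x_t⟫ / S_t and S_t := sup_{s∈A} ⟪−∇f(x_t), ρ s⟫. Then for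 every t ≥ 0, the suboptimality ε_t := f(x_t) − f(x⋆) satisfies ε_{t+1} ≤ (1 − δ²·μ̃/C)·ε_t. -/

import Mathlib

/-!
The step along the atom `z_t` minimizes the quadratic upper model given by the curvature bound,
so it decreases `f` by `ρ² ⟪-∇f(x_t), z_t⟫² / (2C) ≥ δ² S_t² / (2C)`, where
`S_t = ρ · sup_{s ∈ A} ⟪-∇f(x_t), s⟫` is the support function of `ρ · conv(A)` (by symmetry of `A`
it also bounds the duality gap `⟪-∇f(x_t), x⋆ - x_t⟫` by `2 S_t`). On the other side, maximizing
the strong-convexity lower bound over the duality gap gives `μ̃ ε_t ≤ S_t² / 2`; when the gap is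
nonpositive, convexity gives `ε_t ≤ 0` directly. The two estimates combine into the contraction.
-/

open scoped RealInnerProductSpace Pointwise

theorem mul_le_sq_div_two_of_add_sq_div_le {ε p S μ : ℝ} (hμ : 0 ≤ μ) (hε : ε ≤ p)
    (hS : 0 < p → S ≠ 0) (hstrong : 0 < p → ε + (p / S) ^ 2 / 2 * μ ≤ p) :
    μ * ε ≤ S ^ 2 / 2 := by
  rcases le_or_gt p 0 with hp | hp
  · nlinarith [sq_nonneg S]
  · have hS := hS hp
    calc μ * ε ≤ μ * (p - (p / S) ^ 2 / 2 * μ) := by gcongr; linarith [hstrong hp]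
      _ = S ^ 2 / 2 - (S - μ * p / S) ^ 2 / 2 := by field_simp; ring
      _ ≤ S ^ 2 / 2 := by nlinarith [sq_nonneg (S - μ * p / S)]

theorem le_one_sub_mul_of_le_sub_sq_div {ε ε' a b δ μ C : ℝ} (hC : 0 < C) (hb : 0 ≤ δ * b)
    (hba : δ * b ≤ a) (hε : μ * ε ≤ b ^ 2 / 2) (hε' : ε' ≤ ε - a ^ 2 / (2 * C)) :
    ε' ≤ (1 - δ ^ 2 * μ / C) * ε := by
  have hsq : (δ * b) ^ 2 ≤ a ^ 2 := pow_le_pow_left₀ hb hba 2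
  have : δ ^ 2 * μ / C * ε ≤ a ^ 2 / (2 * C) := by
    calc δ ^ 2 * μ / C * ε = δ ^ 2 * (μ * ε) / C := by ring
      _ ≤ δ ^ 2 * (b ^ 2 / 2) / C := by gcongr
      _ = (δ * b) ^ 2 / (2 * C) := by ring
      _ ≤ a ^ 2 / (2 * C) := by gcongr
  linarith

section

variable {H : Type*} [NormedAddCommGroup H] [InnerProductSpace ℝ H]

theorem ConvexOn.add_inner_sub_le_of_hasGradientAt [CompleteSpace H] {f : H → ℝ} {g x y : H}
    (hf : ConvexOn ℝ Set.univ f) (hg : HasGradientAt f g x) : f x + ⟪g, y - x⟫ ≤ f y := by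
  have hline : ConvexOn ℝ Set.univ (f ∘ AffineMap.lineMap (k := ℝ) x y) :=
    hf.comp_affineMap (AffineMap.lineMap x y)
  have hderiv : HasDerivAt (f ∘ AffineMap.lineMap (k := ℝ) x y) ⟪g, y - x⟫ 0 := by
    have hg' : HasFDerivAt f (InnerProductSpace.toDual ℝ H g)
        (AffineMap.lineMap x y (0 : ℝ)) := by
      simpa using hg.hasFDerivAt
    simpa using hg'.comp_hasDerivAt (0 : ℝ) AffineMap.hasDerivAt_lineMap
  simpa [slope_def_field, le_sub_iff_add_le'] using
    hline.le_slope_of_hasDerivAt (Set.mem_univ 0) (Set.mem_univ 1) one_pos hderiv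

theorem bddAbove_image_inner {A : Set H} (hA : Bornology.IsBounded A) (v : H) :
    BddAbove ((fun s => ⟪v, s⟫) '' A) := by
  obtain ⟨M, hM⟩ := hA.exists_norm_le
  refine ⟨‖v‖ * M, ?_⟩
  rintro r ⟨a, ha, rfl⟩
  exact (real_inner_le_norm v a).trans (by gcongr; exact hM a ha)

theorem inner_le_smul_sSup_of_mem_smul_convexHull {A : Set H} (hA : Bornology.IsBounded A)
    (v : H) {ρ : ℝ} (hρ : 0 ≤ ρ) {w : H} (hw : w ∈ ρ • convexHull ℝ A) :
    ⟪v, w⟫ ≤ ρ * sSup ((fun s => ⟪v, s⟫) '' A) := by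
  obtain ⟨u, hu, rfl⟩ := hw
  have hhull : convexHull ℝ A ⊆ {w | ⟪v, w⟫ ≤ sSup ((fun s => ⟪v, s⟫) '' A)} :=
    convexHull_min (fun a ha => le_csSup (bddAbove_image_inner hA v) ⟨a, ha, rfl⟩)
      (convex_halfSpace_le (innerₛₗ ℝ v).isLinear _)
  rw [real_inner_smul_right]
  exact mul_le_mul_of_nonneg_left (hhull hu) hρ

theorem image_inner_neg_left_of_eq_neg {A : Set H} (hsymm : A = -A) (v : H) :
    (fun s => ⟪-v, s⟫) '' A = (fun s => ⟪v, s⟫) '' A := by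
  conv_lhs => rw [hsymm]
  rw [← Set.image_neg_eq_neg, Set.image_image]
  simp [inner_neg_left, inner_neg_right]

theorem inner_sub_le_two_mul_sSup_of_mem_smul_convexHull {A : Set H}
    (hA : Bornology.IsBounded A) (hsymm : A = -A) (v : H) {ρ : ℝ} (hρ : 0 ≤ ρ) {x y : H}
    (hx : x ∈ ρ • convexHull ℝ A) (hy : y ∈ ρ • convexHull ℝ A) :
    ⟪v, y - x⟫ ≤ 2 * (ρ * sSup ((fun s => ⟪v, s⟫) '' A)) := by
  have hy' := inner_le_smul_sSup_of_mem_smul_convexHull hA v hρ hy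
  have hx' := inner_le_smul_sSup_of_mem_smul_convexHull hA (-v) hρ hx
  rw [image_inner_neg_left_of_eq_neg hsymm, inner_neg_left] at hx'
  rw [inner_sub_right]
  linarith

theorem sSup_image_inner_nonneg {A : Set H} (hA : Bornology.IsBounded A) (hsymm : A = -A)
    {a : H} (ha : a ∈ A) (v : H) : 0 ≤ sSup ((fun s => ⟪v, s⟫) '' A) := by
  have hneg : -a ∈ A := by rw [hsymm]; exact Set.neg_mem_neg.mpr ha
  have h₁ := le_csSup (bddAbove_image_inner hA v) ⟨a, ha, rfl⟩
  have h₂ := le_csSup (bddAbove_image_inner hA v) ⟨-a, hneg, rfl⟩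
  simp only [inner_neg_right] at h₂
  linarith

theorem sInf_image_inner_eq_neg_sSup (A : Set H) (v : H) :
    sInf ((fun s => ⟪v, s⟫) '' A) = -sSup ((fun s => ⟪-v, s⟫) '' A) := by
  rw [Real.sInf_def, ← Set.image_neg_eq_neg, Set.image_image]
  simp [inner_neg_left]

theorem mul_sSup_le_inner_of_le_mul_sInf {A : Set H} {g z : H} {δ : ℝ}
    (h : ⟪g, z⟫ ≤ δ * sInf ((fun s => ⟪g, s⟫) '' A)) :
    δ * sSup ((fun s => ⟪-g, s⟫) '' A) ≤ ⟪-g, z⟫ := by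
  rw [sInf_image_inner_eq_neg_sSup] at h
  rw [inner_neg_left]
  linarith

theorem sSup_image_inner_smul_right (A : Set H) (v : H) {ρ : ℝ} (hρ : 0 ≤ ρ) :
    sSup ((fun s => ⟪v, ρ • s⟫) '' A) = ρ * sSup ((fun s => ⟪v, s⟫) '' A) := by
  rw [← smul_eq_mul, ← Real.sSup_smul_of_nonneg hρ, ← Set.image_smul, Set.image_image]
  simp [real_inner_smul_right]

theorem le_sub_sq_div_of_forall_le_quadratic {f : H → ℝ} {x v g : H} {C : ℝ}
    (h : ∀ γ : ℝ, f (x + γ • v) ≤ f x + γ * ⟪g, v⟫ + γ ^ 2 / 2 * C) :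
    f (x + (⟪-g, v⟫ / C) • v) ≤ f x - ⟪g, v⟫ ^ 2 / (2 * C) := by
  have key : ⟪-g, v⟫ / C * ⟪g, v⟫ + (⟪-g, v⟫ / C) ^ 2 / 2 * C = -(⟪g, v⟫ ^ 2 / (2 * C)) := by
    rcases eq_or_ne C 0 with rfl | hC
    · simp
    · rw [inner_neg_left]; field_simp; ring
  linarith [h (⟪-g, v⟫ / C)]

theorem le_sub_sq_div_of_forall_le_quadratic_smul {f : H → ℝ} {x z g : H} {ρ C : ℝ}
    (h : ∀ γ : ℝ, f (x + γ • (ρ • z)) ≤ f x + γ * ⟪g, ρ • z⟫ + γ ^ 2 / 2 * C) :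
    f (x + (ρ ^ 2 * ⟪-g, z⟫ / C) • z) ≤ f x - (ρ * ⟪-g, z⟫) ^ 2 / (2 * C) := by
  have hstep : (ρ ^ 2 * ⟪-g, z⟫ / C) • z = (⟪-g, ρ • z⟫ / C) • (ρ • z) := by
    rw [smul_smul, real_inner_smul_right]
    ring_nf
  have hsq : ⟪g, ρ • z⟫ ^ 2 = (ρ * ⟪-g, z⟫) ^ 2 := by
    rw [real_inner_smul_right, inner_neg_left]
    ring
  rw [hstep, ← hsq]
  exact le_sub_sq_div_of_forall_le_quadratic h

theorem ConvexOn.mul_sub_le_sq_div_two_of_add_inner_add_sq_div_le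
    [CompleteSpace H] {f : H → ℝ} {g x y : H} {S μ : ℝ} (hf : ConvexOn ℝ Set.univ f)
    (hg : HasGradientAt f g x) (hμ : 0 ≤ μ) (hS : 0 < ⟪-g, y - x⟫ → S ≠ 0)
    (hstrong : ⟪g, y - x⟫ < 0 → f x + ⟪g, y - x⟫ + (⟪-g, y - x⟫ / S) ^ 2 / 2 * μ ≤ f y) :
    μ * (f x - f y) ≤ S ^ 2 / 2 := by
  have hneg := inner_neg_left (𝕜 := ℝ) g (y - x)
  refine mul_le_sq_div_two_of_add_sq_div_le hμ ?_ hS fun hp => ?_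
  · linarith [hf.add_inner_sub_le_of_hasGradientAt hg (y := y)]
  · linarith [hstrong (by linarith)]

end

theorem affineInvariantMatchingPursuit_linear_convergence_general
    {H : Type*} [NormedAddCommGroup H] [InnerProductSpace ℝ H] [CompleteSpace H]
    (A : Set H) (hAbdd : Bornology.IsBounded A)
    (hsym : A = -A)
    (f : H → ℝ) (f' : H → H)
    (hconv : ConvexOn ℝ Set.univ f)
    (hdiff : ∀ w : H, HasGradientAt f (f' w) w)
    (δ : ℝ) (hδ : δ ∈ Set.Ioc (0:ℝ) 1)
    (ρ : ℝ) (hρ : 0 < ρ)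
    (C : ℝ) (hC : 0 < C)
    (μt : ℝ) (hμt : 0 < μt)
    (hcurv : ∀ x ∈ ρ • convexHull ℝ A, ∀ s ∈ A, ∀ γ : ℝ,
        f (x + γ • (ρ • s)) ≤ f x + γ * ⟪f' x, ρ • s⟫ + γ ^ 2 / 2 * C)
    (xstar : H) (hxstar : xstar ∈ ρ • convexHull ℝ A)
    (x z : ℕ → H)
    (hxmem : ∀ t, x t ∈ ρ • convexHull ℝ A)
    (hzA : ∀ t, z t ∈ A)
    (hlmo : ∀ t, ⟪f' (x t), z t⟫ ≤ δ * sInf ((fun w => ⟪f' (x t), w⟫) '' A))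
    (hupd : ∀ t, x (t + 1) = x t + (ρ ^ 2 * ⟪-f' (x t), z t⟫ / C) • z t)
    (hstrong : ∀ t, ⟪f' (x t), xstar - x t⟫ < 0 →
        f (x t) + ⟪f' (x t), xstar - x t⟫ +
          (⟪-f' (x t), xstar - x t⟫ / sSup ((fun s => ⟪-f' (x t), ρ • s⟫) '' A)) ^ 2 / 2 * μt
        ≤ f xstar) :
    ∀ t : ℕ, f (x (t + 1)) - f xstar ≤ (1 - δ ^ 2 * μt / C) * (f (x t) - f xstar) := by
  intro t
  have hS := sSup_image_inner_smul_right A (-f' (x t)) hρ.le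
  have hc := sSup_image_inner_nonneg hAbdd hsym (hzA t) (-f' (x t))
  have hwidth := inner_sub_le_two_mul_sSup_of_mem_smul_convexHull hAbdd hsym
    (-f' (x t)) hρ.le (hxmem t) hxstar
  have herr := hconv.mul_sub_le_sq_div_two_of_add_inner_add_sq_div_le (hdiff (x t)) hμt.le
    -- a positive duality gap forces `S_t > 0` through `hwidth`, so `hstrong` is no junk division
    (fun hp => by rw [hS]; exact ne_of_gt (by linarith)) (hstrong t)
  rw [hS] at herr
  have hdesc := le_sub_sq_div_of_forall_le_quadratic_smul (hcurv _ (hxmem t) _ (hzA t))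
  rw [← hupd t] at hdesc
  have hdir := mul_le_mul_of_nonneg_left (mul_sSup_le_inner_of_le_mul_sInf (hlmo t)) hρ.le
  rw [mul_left_comm] at hdir
  exact le_one_sub_mul_of_le_sub_sq_div hC (mul_nonneg hδ.1.le (mul_nonneg hρ.le hc)) hdir herr
    (by linarith)

/-- Linear convergence of the Affine Invariant Generalized Matching Pursuit algorithm under an
affine invariant curvature bound `C` and strong-convexity-type lower bound `μ̃`
(Theorem 8 / `thm:LinearMPAffineInvariant`). -/
theorem affineInvariantMatchingPursuit_linear_convergence
    {H : Type*} [NormedAddCommGroup H] [InnerProductSpace ℝ H] [CompleteSpace H]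
    (A : Set H) (hA : A.Nonempty) (hAbdd : Bornology.IsBounded A)
    (hsym : A = -A)
    (f : H → ℝ) (f' : H → H)
    (hconv : ConvexOn ℝ Set.univ f)
    (hdiff : ∀ w : H, HasGradientAt f (f' w) w)
    (δ : ℝ) (hδ : δ ∈ Set.Ioc (0:ℝ) 1)
    (ρ : ℝ) (hρ : 0 < ρ)
    (C : ℝ) (hC : 0 < C)
    (μt : ℝ) (hμt : 0 < μt)
    (hcurv : ∀ x ∈ ρ • convexHull ℝ A, ∀ s ∈ A, ∀ γ : ℝ,
        f (x + γ • (ρ • s)) ≤ f x + γ * ⟪f' x, ρ • s⟫ + γ ^ 2 / 2 * C)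
    (xstar : H) (hxstar : xstar ∈ ρ • convexHull ℝ A)
    (hmin : ∀ w ∈ ρ • convexHull ℝ A, f xstar ≤ f w)
    (x z : ℕ → H)
    (hxmem : ∀ t, x t ∈ ρ • convexHull ℝ A)
    (hzA : ∀ t, z t ∈ A)
    (hlmo : ∀ t, ⟪f' (x t), z t⟫ ≤ δ * sInf ((fun w => ⟪f' (x t), w⟫) '' A))
    (hupd : ∀ t, x (t + 1) = x t + (ρ ^ 2 * ⟪-f' (x t), z t⟫ / C) • z t)
    (hstrong : ∀ t, ⟪f' (x t), xstar - x t⟫ < 0 →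
        f (x t) + ⟪f' (x t), xstar - x t⟫ +
          (⟪-f' (x t), xstar - x t⟫ / sSup ((fun s => ⟪-f' (x t), ρ • s⟫) '' A)) ^ 2 / 2 * μt
        ≤ f xstar) :
    ∀ t : ℕ, f (x (t + 1)) - f xstar ≤ (1 - δ ^ 2 * μt / C) * (f (x t) - f xstar) :=
  affineInvariantMatchingPursuit_linear_convergence_general A hAbdd hsym f f' hconv hdiff δ hδ ρ hρ
    C hC μt hμt hcurv xstar hxstar x z hxmem hzA hlmo hupd hstrong
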